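/- arXiv:2304.11746 — 8 statements merged into one kernel-verified Lean document; each statement's English description precedes it below -/
import Mathlib

section
/- The operator HK is a Kuratowski closure operator on S(M); that is: (1) HK(∅) = ∅; (2) for all X ⊆ S(M), X ⊆ HK(X); (3) for all X ⊆ S(M), HK(HK(X)) = HK(X); (4) for all X, X' ⊆ S(M), HK(X ∪ X') = HK(X) ∪ HK(X'). -/
/-- An ideal of a commutative monoid `M`: a subset closed under
multiplication by arbitrary elements of `M`. -/
def IsIdealM {M : Type*} [CommMonoid M] (I : Set M) : Prop :=
  ∀ x ∈ I, ∀ m : M, x * m ∈ I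

/-- A strongly irreducible ideal: a proper ideal `I` such that for all ideals
`J`, `K`, if `J ∩ K ⊆ I` then `J ⊆ I` or `K ⊆ I`. -/
def IsStronglyIrr {M : Type*} [CommMonoid M] (I : Set M) : Prop :=
  IsIdealM I ∧ I ≠ Set.univ ∧
    ∀ J K : Set M, IsIdealM J → IsIdealM K → J ∩ K ⊆ I → J ⊆ I ∨ K ⊆ I

/-- A prime ideal of a commutative monoid. -/
def IsPrimeIdealM {M : Type*} [CommMonoid M] (P : Set M) : Prop :=
  IsIdealM P ∧ P ≠ Set.univ ∧ ∀ x y : M, x * y ∈ P → x ∈ P ∨ y ∈ P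

/-- A maximal ideal of a commutative monoid: a proper ideal maximal among
proper ideals. -/
def IsMaximalIdealM {M : Type*} [CommMonoid M] (I : Set M) : Prop :=
  IsIdealM I ∧ I ≠ Set.univ ∧
    ∀ J : Set M, IsIdealM J → J ≠ Set.univ → I ⊆ J → J = I

/-- `SIr M` is the set (type) of strongly irreducible ideals of `M`. -/
structure SIr (M : Type*) [CommMonoid M] where
  carrier : Set M
  strongly_irr : IsStronglyIrr carrier

namespace SIr

variable {M : Type*} [CommMonoid M]

@[ext] theorem ext {I J : SIr M} (h : I.carrier = J.carrier) : I = J := by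
  cases I; cases J; simpa using h

/-- `KK X = ⋂_{I ∈ X} I`, the kernel of a set of strongly irreducible ideals. -/
def KK (X : Set (SIr M)) : Set M := ⋂ I ∈ X, I.carrier

/-- The hull-kernel operator `HK`: for nonempty `X`,
`HK X = {J ∈ S(M) : K(X) ⊆ J}`, and `HK ∅ = ∅`. -/
def HK (X : Set (SIr M)) : Set (SIr M) :=
  {J : SIr M | X.Nonempty ∧ KK X ⊆ J.carrier}

theorem HK_empty : HK (∅ : Set (SIr M)) = ∅ := by
  ext J
  simp [HK, Set.not_nonempty_empty]

theorem mem_HK_of_nonempty {X : Set (SIr M)} (hX : X.Nonempty) {J : SIr M} :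
    J ∈ HK X ↔ KK X ⊆ J.carrier :=
  ⟨fun h => h.2, fun h => ⟨hX, h⟩⟩

theorem KK_antitone {X X' : Set (SIr M)} (h : X ⊆ X') : KK X' ⊆ KK X := by
  intro m hm
  simp only [KK, Set.mem_iInter] at hm ⊢
  exact fun I hI => hm I (h hI)

theorem KK_isIdeal (X : Set (SIr M)) : IsIdealM (KK X) := by
  intro x hx m
  simp only [KK, Set.mem_iInter] at hx ⊢
  exact fun I hI => I.strongly_irr.1 x (hx I hI) m

theorem subset_HK (X : Set (SIr M)) : X ⊆ HK X := by
  intro J hJ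
  refine ⟨⟨J, hJ⟩, fun m hm => ?_⟩
  simp only [KK, Set.mem_iInter] at hm
  exact hm J hJ

theorem HK_mono {X X' : Set (SIr M)} (h : X ⊆ X') : HK X ⊆ HK X' := by
  rintro J ⟨hne, hsub⟩
  exact ⟨hne.mono h, (KK_antitone h).trans hsub⟩

theorem HK_idem (X : Set (SIr M)) : HK (HK X) = HK X := by
  refine Set.Subset.antisymm ?_ (subset_HK _)
  rintro J ⟨hne, hsub⟩
  obtain ⟨I, hI⟩ := hne
  refine ⟨hI.1, Set.Subset.trans ?_ hsub⟩
  intro m hm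
  simp only [KK, Set.mem_iInter]
  exact fun L hL => hL.2 hm

theorem HK_union (X X' : Set (SIr M)) : HK (X ∪ X') = HK X ∪ HK X' := by
  rcases X.eq_empty_or_nonempty with rfl | hX
  · rw [Set.empty_union, HK_empty, Set.empty_union]
  rcases X'.eq_empty_or_nonempty with rfl | hX'
  · rw [Set.union_empty, HK_empty, Set.union_empty]
  refine Set.Subset.antisymm ?_
    (Set.union_subset (HK_mono Set.subset_union_left)
      (HK_mono Set.subset_union_right))
  rintro J ⟨-, hsub⟩
  have hKK : KK X ∩ KK X' ⊆ J.carrier := by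
    refine Set.Subset.trans ?_ hsub
    intro m hm
    simp only [KK, Set.mem_iInter, Set.mem_inter_iff] at hm ⊢
    rintro I (hI | hI)
    · exact hm.1 I hI
    · exact hm.2 I hI
  rcases J.strongly_irr.2.2 (KK X) (KK X') (KK_isIdeal X) (KK_isIdeal X') hKK with h | h
  · exact Or.inl ⟨hX, h⟩
  · exact Or.inr ⟨hX', h⟩

/-- The terminal-space (Zariski) topology on `SIr M`: the closed sets are
exactly the sets of the form `HK X`. -/
instance instTopologicalSpace : TopologicalSpace (SIr M) :=
  TopologicalSpace.ofClosed (Set.range HK)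
    ⟨∅, HK_empty⟩
    (fun A hA => by
      refine ⟨⋂₀ A, Set.Subset.antisymm (Set.subset_sInter fun C hC => ?_) (subset_HK _)⟩
      obtain ⟨Y, hY⟩ := hA hC
      calc HK (⋂₀ A) ⊆ HK C := HK_mono (Set.sInter_subset_of_mem hC)
        _ = HK (HK Y) := by rw [hY]
        _ = HK Y := HK_idem Y
        _ = C := hY)
    (fun A hA B hB => by
      obtain ⟨Y, hY⟩ := hA
      obtain ⟨Z, hZ⟩ := hB
      exact ⟨Y ∪ Z, by rw [HK_union, hY, hZ]⟩)

theorem isClosed_iff {C : Set (SIr M)} : IsClosed C ↔ ∃ X, HK X = C := by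
  rw [← isOpen_compl_iff]
  show Cᶜᶜ ∈ Set.range HK ↔ _
  rw [compl_compl]
  exact Iff.rfl

end SIr

open SIr in
/-- `HK` is a Kuratowski closure operator on `S(M)`. -/
theorem HK_kuratowski (M : Type*) [CommMonoid M] :
    HK (∅ : Set (SIr M)) = ∅ ∧
    (∀ X : Set (SIr M), X ⊆ HK X) ∧
    (∀ X : Set (SIr M), HK (HK X) = HK X) ∧
    (∀ X X' : Set (SIr M), HK (X ∪ X') = HK X ∪ HK X') :=
  ⟨HK_empty, subset_HK, HK_idem, HK_union⟩
end

section
/- For all nonempty subsets X, X' ⊆ S(M), the set {J ∈ S(M) : K(X) ∩ K(X') ⊆ J} equals HK(X) ∪ HK(X'). -/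
theorem IsStronglyIrr.inter_subset_iff {M : Type*} [CommMonoid M] {I J K : Set M}
    (hI : IsStronglyIrr I) (hJ : IsIdealM J) (hK : IsIdealM K) :
    J ∩ K ⊆ I ↔ J ⊆ I ∨ K ⊆ I :=
  ⟨hI.2.2 J K hJ hK, fun h => h.elim (Set.inter_subset_left.trans ·)
    (Set.inter_subset_right.trans ·)⟩

open SIr in
/-- for nonempty `X, X' ⊆ S(M)`,
`{J ∈ S(M) : K(X) ∩ K(X') ⊆ J} = HK(X) ∪ HK(X')`. -/
theorem hull_inter_eq_HK_union (M : Type*) [CommMonoid M]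
    (X X' : Set (SIr M)) (hX : X.Nonempty) (hX' : X'.Nonempty) :
    {J : SIr M | KK X ∩ KK X' ⊆ J.carrier} = HK X ∪ HK X' := by
  ext J
  rw [Set.mem_ofPred_eq, Set.mem_union, mem_HK_of_nonempty hX, mem_HK_of_nonempty hX']
  exact J.strongly_irr.inter_subset_iff (KK_isIdeal X) (KK_isIdeal X')
end

section
/- The terminal space S(M) of a commutative monoid M is quasi-compact: for every family {C_λ}_{λ∈Λ} of closed subsets of the terminal space with ⋂_{λ∈Λ} C_λ = ∅, there is a finite subset {λ_1, …, λ_n} ⊆ Λ with ⋂_{i=1}^n C_{λ_i} = ∅. -/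
/-! The non-units of `M` form the largest proper ideal, which is therefore strongly irreducible.
Every nonempty closed set `HK X` contains it, because `K(X)` is a proper ideal; so its only open
neighbourhood is the whole space, and any open cover has a one-element subcover. -/

open Filter Topology

theorem compactSpace_of_nhds_eq_top {X : Type*} [TopologicalSpace X] {x : X} (hx : 𝓝 x = ⊤) :
    CompactSpace X :=
  isCompact_univ_iff.mp fun f _ _ => ⟨x, Set.mem_univ x, by rwa [ClusterPt, hx, top_inf_eq]⟩

section nonunits

variable {M : Type*} [CommMonoid M]

theorem IsIdealM.subset_nonunits {I : Set M} (hI : IsIdealM I) (hI_ne : I ≠ Set.univ) :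
    I ⊆ nonunits M := by
  rintro _ hu ⟨u, rfl⟩
  exact hI_ne <| Set.eq_univ_of_forall fun m => by
    simpa using hI _ hu (↑u⁻¹ * m)

theorem isIdealM_nonunits : IsIdealM (nonunits M) :=
  fun _ hx _ => mul_mem_nonunits_left hx

theorem isStronglyIrr_nonunits : IsStronglyIrr (nonunits M) := by
  refine ⟨isIdealM_nonunits, fun h => one_notMem_nonunits (h ▸ Set.mem_univ 1), ?_⟩
  intro J K hJ hK hJK
  by_cases hJ_top : J = Set.univ
  · by_cases hK_top : K = Set.univ
    · subst hJ_top hK_top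
      exact absurd (hJK ⟨Set.mem_univ 1, Set.mem_univ 1⟩) one_notMem_nonunits
    · exact Or.inr (hK.subset_nonunits hK_top)
  · exact Or.inl (hJ.subset_nonunits hJ_top)

end nonunits

namespace SIr

variable (M : Type*) [CommMonoid M]

def nonunits : SIr M := ⟨_root_.nonunits M, isStronglyIrr_nonunits⟩

variable {M}

theorem carrier_subset_nonunits (I : SIr M) : I.carrier ⊆ _root_.nonunits M :=
  I.strongly_irr.1.subset_nonunits I.strongly_irr.2.1

theorem nonunits_mem_of_isClosed {C : Set (SIr M)} (hC : IsClosed C) (hC_ne : C.Nonempty) :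
    nonunits M ∈ C := by
  obtain ⟨X, rfl⟩ := isClosed_iff.mp hC
  obtain ⟨_, ⟨I, hI⟩, -⟩ := hC_ne
  exact ⟨⟨I, hI⟩, (Set.biInter_subset_of_mem hI).trans I.carrier_subset_nonunits⟩

theorem nhds_nonunits : 𝓝 (nonunits M) = ⊤ := by
  refine top_unique (le_nhds_iff.mpr fun U hU hU_open => mem_top.mpr ?_)
  by_contra hU_ne
  exact nonunits_mem_of_isClosed hU_open.isClosed_compl (Set.nonempty_compl.mpr hU_ne) hU

end SIr

/-- the terminal space is quasi-compact. -/
theorem terminal_compactSpace (M : Type*) [CommMonoid M] :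
    CompactSpace (SIr M) :=
  compactSpace_of_nhds_eq_top SIr.nhds_nonunits
end

section
/- The terminal space S(M) of a commutative monoid M is a T1-space if and only if no strongly irreducible ideal of M is properly contained in another strongly irreducible ideal; that is, if and only if for all I, J ∈ S(M), I ⊆ J implies I = J. -/
namespace SIr

variable {M : Type*} [CommMonoid M]

theorem KK_singleton (I : SIr M) : KK {I} = I.carrier := by
  simp [KK]

/-- Closed sets of the terminal space are upward closed under inclusion of carriers, and
`HK {I}` is the smallest closed set containing `I`. -/
theorem specializes_iff_carrier_subset {I J : SIr M} : I ⤳ J ↔ I.carrier ⊆ J.carrier := by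
  rw [specializes_iff_forall_closed]
  constructor
  · intro h
    have hJ : J ∈ HK {I} := h _ (isClosed_iff.2 ⟨_, rfl⟩) (subset_HK _ rfl)
    rwa [mem_HK_of_nonempty (Set.singleton_nonempty I), KK_singleton] at hJ
  · rintro hIJ C hC hI
    obtain ⟨X, rfl⟩ := isClosed_iff.1 hC
    exact ⟨hI.1, hI.2.trans hIJ⟩

end SIr

/-- the terminal space is T1 iff no strongly irreducible ideal is
properly contained in another one. -/
theorem terminal_t1_iff (M : Type*) [CommMonoid M] :
    T1Space (SIr M) ↔ ∀ I J : SIr M, I.carrier ⊆ J.carrier → I = J := by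
  rw [t1Space_iff_specializes_imp_eq]
  exact ⟨fun h I J hIJ => h (SIr.specializes_iff_carrier_subset.2 hIJ),
    fun h I J hIJ => h I J (SIr.specializes_iff_carrier_subset.1 hIJ)⟩
end

section
/- Let X be a nonempty closed subset of the terminal space S(M). Then X is an irreducible subset of the terminal space if and only if the ideal K(X) = ⋂_{I ∈ X} I is a strongly irreducible ideal of M. -/
open SIr in
/-- a nonempty closed subset `X` of the terminal space is
irreducible iff `K(X)` is a strongly irreducible ideal of `M`. -/
theorem closed_irreducible_iff_KK_stronglyIrr (M : Type*) [CommMonoid M]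
    (X : Set (SIr M)) (hne : X.Nonempty) (hcl : IsClosed X) :
    IsIrreducible X ↔ IsStronglyIrr (KK X) := by
  constructor
  · rintro ⟨-, hpre⟩
    refine ⟨KK_isIdeal X, ?_, ?_⟩
    · obtain ⟨I, hI⟩ := hne
      intro h
      apply I.strongly_irr.2.1
      apply Set.eq_univ_of_univ_subset
      rw [← h]
      intro m hm
      simp only [KK, Set.mem_iInter] at hm
      exact hm I hI
    · intro J K hJ hK hJK
      have hclosed : ∀ L : Set M, IsClosed {I : SIr M | L ⊆ I.carrier} := by
        intro L
        rw [isClosed_iff]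
        rcases Set.eq_empty_or_nonempty {I : SIr M | L ⊆ I.carrier} with he | hn
        · exact ⟨∅, by rw [HK_empty, he]⟩
        · refine ⟨{I : SIr M | L ⊆ I.carrier}, Set.Subset.antisymm ?_ (subset_HK _)⟩
          rintro I ⟨-, hsub⟩
          refine Set.Subset.trans ?_ hsub
          intro m hm
          simp only [KK, Set.mem_iInter]
          exact fun J hJ => hJ hm
      have hcover : X ⊆ {I : SIr M | J ⊆ I.carrier} ∪ {I : SIr M | K ⊆ I.carrier} := by
        intro I hI
        have hIK : J ∩ K ⊆ I.carrier := by
          refine hJK.trans ?_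
          intro m hm
          simp only [KK, Set.mem_iInter] at hm
          exact hm I hI
        exact I.strongly_irr.2.2 J K hJ hK hIK
      rcases (isPreirreducible_iff_isClosed_union_isClosed.mp hpre) _ _ (hclosed J) (hclosed K)
        hcover with h | h
      · left
        intro m hm
        simp only [KK, Set.mem_iInter]
        exact fun I hI => h hI hm
      · right
        intro m hm
        simp only [KK, Set.mem_iInter]
        exact fun I hI => h hI hm
  · rintro ⟨-, -, hsi⟩
    refine ⟨hne, isPreirreducible_iff_isClosed_union_isClosed.mpr ?_⟩
    intro C₁ C₂ hC₁ hC₂ hX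
    obtain ⟨Y₁, rfl⟩ := isClosed_iff.mp hC₁
    obtain ⟨Y₂, rfl⟩ := isClosed_iff.mp hC₂
    rcases Y₁.eq_empty_or_nonempty with rfl | hY₁
    · right; intro I hI
      rcases hX hI with h | h
      · rw [HK_empty] at h; exact absurd h (Set.notMem_empty I)
      · exact h
    rcases Y₂.eq_empty_or_nonempty with rfl | hY₂
    · left; intro I hI
      rcases hX hI with h | h
      · exact h
      · rw [HK_empty] at h; exact absurd h (Set.notMem_empty I)
    have hinter : KK Y₁ ∩ KK Y₂ ⊆ KK X := by
      intro m hm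
      simp only [KK, Set.mem_iInter]
      intro I hI
      rcases hX hI with h | h
      · exact h.2 hm.1
      · exact h.2 hm.2
    rcases hsi _ _ (KK_isIdeal Y₁) (KK_isIdeal Y₂) hinter with h | h
    · left; intro I hI
      refine ⟨hY₁, h.trans ?_⟩
      intro m hm
      simp only [KK, Set.mem_iInter] at hm
      exact hm I hI
    · right; intro I hI
      refine ⟨hY₂, h.trans ?_⟩
      intro m hm
      simp only [KK, Set.mem_iInter] at hm
      exact hm I hI
end

section
/- If M is a Noetherian commutative monoid (i.e., M satisfies the ascending chain condition on ideals), then the terminal space S(M) is a Noetherian topological space (i.e., it satisfies the descending chain condition on closed subsets). -/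
/-- if `M` satisfies the ascending chain condition on ideals,
then the terminal space is a Noetherian topological space. -/
theorem noetherianSpace_of_acc (M : Type*) [CommMonoid M]
    (hacc : ∀ f : ℕ → Set M, (∀ n, IsIdealM (f n)) → (∀ n, f n ⊆ f (n + 1)) →
      ∃ N : ℕ, ∀ n : ℕ, N ≤ n → f n = f N) :
    TopologicalSpace.NoetherianSpace (SIr M) := by
  constructor
  refine @IsWellFounded.wf _ _ (wellFoundedGT_iff_monotone_chain_condition.mpr ?_)
  intro a
  -- closed complements
  set C : ℕ → Set (SIr M) := fun n => ((a n : Set (SIr M)))ᶜ with hC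
  have hCclosed : ∀ n, IsClosed (C n) := fun n => (a n).2.isClosed_compl
  have hCanti : ∀ {n m : ℕ}, n ≤ m → C m ⊆ C n := fun {n m} h =>
    Set.compl_subset_compl.mpr (a.mono h)
  -- each nonempty closed set is its own hull-kernel
  have hfix : ∀ {D : Set (SIr M)}, IsClosed D → D.Nonempty → SIr.HK D = D := by
    intro D hD hne
    obtain ⟨X, hX⟩ := SIr.isClosed_iff.mp hD
    have hXne : X.Nonempty := by
      rcases X.eq_empty_or_nonempty with rfl | h
      · rw [SIr.HK_empty] at hX; exact absurd hX.symm hne.ne_empty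
      · exact h
    calc SIr.HK D = SIr.HK (SIr.HK X) := by rw [hX]
      _ = SIr.HK X := SIr.HK_idem X
      _ = D := hX
  have hone : ∀ J : SIr M, (1 : M) ∉ J.carrier := by
    intro J h1
    apply J.strongly_irr.2.1
    ext m
    simp only [Set.mem_univ, iff_true]
    simpa using J.strongly_irr.1 1 h1 m
  -- the increasing chain of kernel ideals
  obtain ⟨N, hN⟩ := hacc (fun n => SIr.KK (C n)) (fun n => SIr.KK_isIdeal _)
    (fun n => SIr.KK_antitone (hCanti (Nat.le_succ n)))
  refine ⟨N, fun m hm => ?_⟩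
  have hKeq : SIr.KK (C m) = SIr.KK (C N) := hN m hm
  have hCeq : C N = C m := by
    rcases (C m).eq_empty_or_nonempty with hme | hmne
    · -- C m empty, so KK (C m) = univ, so C N contains no proper ideals
      have hKuniv : SIr.KK (C m) = Set.univ := by
        rw [hme]; simp [SIr.KK]
      rw [hme]
      by_contra h
      obtain ⟨J, hJ⟩ := Set.nonempty_iff_ne_empty.mpr h
      have : SIr.KK (C N) ⊆ J.carrier := by
        intro x hx
        simp only [SIr.KK, Set.mem_iInter] at hx
        exact hx J hJ
      exact hone J (this (by rw [← hKeq, hKuniv]; trivial))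
    · -- C m nonempty; KK (C m) misses 1, so C N is nonempty too
      obtain ⟨J₀, hJ₀⟩ := id hmne
      have hKne : (1 : M) ∉ SIr.KK (C m) := fun h1 => by
        simp only [SIr.KK, Set.mem_iInter] at h1
        exact hone J₀ (h1 J₀ hJ₀)
      have hNne : (C N).Nonempty := by
        rcases (C N).eq_empty_or_nonempty with hNe | h
        · exfalso; apply hKne; rw [hKeq, hNe]; simp [SIr.KK]
        · exact h
      refine Set.Subset.antisymm ?_ (hCanti hm)
      intro J hJ
      have hJK : SIr.KK (C N) ⊆ J.carrier := by
        intro x hx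
        simp only [SIr.KK, Set.mem_iInter] at hx
        exact hx J hJ
      rw [← hfix (hCclosed m) hmne]
      exact ⟨hmne, hKeq ▸ hJK⟩
  ext x
  have := Set.ext_iff.mp (congrArg compl hCeq) x
  simpa [hC] using this
end

section
/- If I is an ideal of a commutative monoid M and m ∈ M \ I, then there exists a strongly irreducible ideal Q of M with I ⊆ Q and m ∉ Q (namely, any ideal maximal among the ideals containing I and not containing m, which exists by Zorn's lemma, is strongly irreducible). -/
/-! An ideal `Q` maximal among the ideals avoiding `m` is strongly irreducible: for `x ∉ Q` the
ideal `Q ∪ xM` is strictly larger, so it contains `m`, i.e. `m ∈ xM`. Hence if `J ⊄ Q` and `K ⊄ Q`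
then `m` lies in both `J` and `K`, so `J ∩ K ⊄ Q`. Such a `Q` containing a given ideal `I ∌ m`
exists by Zorn's lemma, since a union of ideals avoiding `m` is again one. -/

section IdealM

variable {M : Type*} [CommMonoid M]

theorem isIdealM_sUnion {S : Set (Set M)} (hS : ∀ J ∈ S, IsIdealM J) : IsIdealM (⋃₀ S) := by
  rintro x ⟨J, hJ, hx⟩ a
  exact ⟨J, hJ, hS J hJ x hx a⟩

theorem IsIdealM.union {J K : Set M} (hJ : IsIdealM J) (hK : IsIdealM K) : IsIdealM (J ∪ K) := by
  rintro x (hx | hx) a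
  exacts [Or.inl (hJ x hx a), Or.inr (hK x hx a)]

theorem isIdealM_range_mul (x : M) : IsIdealM (Set.range (x * ·)) := by
  rintro _ ⟨b, rfl⟩ a
  exact ⟨b * a, (mul_assoc x b a).symm⟩

theorem exists_maximal_isIdealM_notMem {I : Set M} (hI : IsIdealM I) {m : M} (hm : m ∉ I) :
    ∃ Q, I ⊆ Q ∧ Maximal (fun J => IsIdealM J ∧ m ∉ J) Q := by
  refine zorn_subset_nonempty {J | IsIdealM J ∧ m ∉ J} (fun c hc _ _ => ?_) I ⟨hI, hm⟩
  refine ⟨⋃₀ c, ⟨isIdealM_sUnion fun J hJ => (hc hJ).1, ?_⟩, fun J => Set.subset_sUnion_of_mem⟩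
  rintro ⟨J, hJ, hmJ⟩
  exact (hc hJ).2 hmJ

theorem Maximal.mem_range_mul_of_notMem {Q : Set M} {m : M}
    (hQ : Maximal (fun J => IsIdealM J ∧ m ∉ J) Q) {x : M} (hx : x ∉ Q) :
    m ∈ Set.range (x * ·) := by
  have hlarger : Q ∪ Set.range (x * ·) ≠ Q := fun h =>
    hx (h ▸ Or.inr ⟨1, mul_one x⟩)
  have hmem : m ∈ Q ∪ Set.range (x * ·) := by
    by_contra hm
    exact hlarger (hQ.eq_of_subset ⟨hQ.prop.1.union (isIdealM_range_mul x), hm⟩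
      Set.subset_union_left).symm
  exact hmem.resolve_left hQ.prop.2

theorem Maximal.isStronglyIrr {Q : Set M} {m : M}
    (hQ : Maximal (fun J => IsIdealM J ∧ m ∉ J) Q) : IsStronglyIrr Q := by
  obtain ⟨hQideal, hmQ⟩ := hQ.prop
  refine ⟨hQideal, fun h => hmQ (h ▸ Set.mem_univ m), fun J K hJ hK hJK => ?_⟩
  by_contra! ⟨hJQ, hKQ⟩
  have mem_of_not_subset {L : Set M} (hL : IsIdealM L) (hLQ : ¬L ⊆ Q) : m ∈ L := by
    obtain ⟨x, hxL, hxQ⟩ := Set.not_subset.1 hLQ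
    obtain ⟨a, rfl⟩ := hQ.mem_range_mul_of_notMem hxQ
    exact hL x hxL a
  exact hmQ (hJK ⟨mem_of_not_subset hJ hJQ, mem_of_not_subset hK hKQ⟩)

end IdealM

/-- if `I` is an ideal and `m ∉ I`, there is a strongly
irreducible ideal `Q` with `I ⊆ Q` and `m ∉ Q`. -/
theorem exists_stronglyIrr_between (M : Type*) [CommMonoid M]
    (I : Set M) (hI : IsIdealM I) (m : M) (hm : m ∉ I) :
    ∃ Q : Set M, IsStronglyIrr Q ∧ I ⊆ Q ∧ m ∉ Q := by
  obtain ⟨Q, hIQ, hQ⟩ := exists_maximal_isIdealM_notMem hI hm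
  exact ⟨Q, hQ.isStronglyIrr, hIQ, hQ.prop.2⟩
end

section
/- Let M be a commutative monoid. The set Max(M) ∩ S(M) of maximal ideals of M (each maximal ideal is strongly irreducible, so this set is the set of all maximal ideals) is dense in the terminal space S(M) if and only if the m-radical of M equals the s-radical of M, i.e., ⋂{Q : Q a maximal ideal of M} = ⋂{J : J a strongly irreducible ideal of M}. -/
/-! The closure of `X ⊆ S(M)` in the terminal space is `HK X`, so `X` is dense iff every
strongly irreducible ideal contains `K(X)`, i.e. iff `K(X) = K(S(M))`; this also covers
`X = ∅`, since `K(∅) = M` is the kernel of `S(M)` only when `S(M) = ∅`. Every maximal ideal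
is strongly irreducible, so for `X = Max(M)` the two kernels are the m- and s-radicals. -/

section Ideals

variable {M : Type*} [CommMonoid M] {I J : Set M}

theorem IsIdealM.union_s14 (hI : IsIdealM I) (hJ : IsIdealM J) : IsIdealM (I ∪ J) :=
  fun x hx m => hx.imp (hI x · m) (hJ x · m)

theorem IsIdealM.eq_univ_of_one_mem (hI : IsIdealM I) (h : 1 ∈ I) : I = Set.univ :=
  Set.eq_univ_of_forall fun m => by simpa using hI 1 h m

theorem IsMaximalIdealM.eq_univ_of_not_subset (hI : IsMaximalIdealM I) (hJ : IsIdealM J)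
    (hJI : ¬J ⊆ I) : J = Set.univ := by
  obtain ⟨hI, hI_ne, hI_max⟩ := hI
  have hIJ : I ∪ J = Set.univ := by
    by_contra hne
    exact hJI (hI_max _ (hI.union_s14 hJ) hne Set.subset_union_left ▸ Set.subset_union_right)
  have hone : 1 ∈ I ∪ J := hIJ ▸ Set.mem_univ 1
  exact hJ.eq_univ_of_one_mem <|
    hone.resolve_left fun h => hI_ne (hI.eq_univ_of_one_mem h)

theorem IsMaximalIdealM.isStronglyIrr (hI : IsMaximalIdealM I) : IsStronglyIrr I := by
  refine ⟨hI.1, hI.2.1, fun J K hJ hK hJK => ?_⟩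
  by_contra! h
  rw [hI.eq_univ_of_not_subset hJ h.1, hI.eq_univ_of_not_subset hK h.2,
    Set.inter_self, Set.univ_subset_iff] at hJK
  exact hI.2.1 hJK

end Ideals

namespace SIr

variable {M : Type*} [CommMonoid M]

theorem closure_eq_HK (X : Set (SIr M)) : closure X = HK X := by
  refine (closure_minimal (subset_HK X) (isClosed_iff.2 ⟨X, rfl⟩)).antisymm ?_
  obtain ⟨Y, hY⟩ := isClosed_iff.1 (isClosed_closure (s := X))
  calc HK X ⊆ HK (closure X) := HK_mono subset_closure
    _ = closure X := by rw [← hY, HK_idem]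

theorem KK_eq_sInter_image (X : Set (SIr M)) : KK X = ⋂₀ (carrier '' X) :=
  (Set.sInter_image _ _).symm

theorem KK_eq_univ_iff {X : Set (SIr M)} : KK X = Set.univ ↔ X = ∅ := by
  simp only [KK, Set.iInter_eq_univ, Set.eq_empty_iff_forall_notMem]
  exact forall_congr' fun I => by simp [I.strongly_irr.2.1]

theorem HK_eq_univ_iff {X : Set (SIr M)} : HK X = Set.univ ↔ KK X = KK Set.univ := by
  rcases X.eq_empty_or_nonempty with rfl | hX
  · rw [HK_empty, eq_comm (a := KK ∅), KK_eq_univ_iff.2 rfl, KK_eq_univ_iff, eq_comm]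
  · rw [← (KK_antitone (Set.subset_univ X)).ge_iff_eq', Set.eq_univ_iff_forall]
    simp only [mem_HK_of_nonempty hX, KK, Set.subset_iInter_iff, Set.mem_univ, forall_const]

theorem dense_iff_KK_eq {X : Set (SIr M)} : Dense X ↔ KK X = KK Set.univ := by
  rw [dense_iff_closure_eq, closure_eq_HK, HK_eq_univ_iff]

theorem KK_univ : KK (Set.univ : Set (SIr M)) = ⋂₀ {J : Set M | IsStronglyIrr J} := by
  rw [KK_eq_sInter_image, Set.image_univ]
  congr 1
  ext J
  exact ⟨fun ⟨I, hI⟩ => hI ▸ I.strongly_irr, fun hJ => ⟨⟨J, hJ⟩, rfl⟩⟩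

theorem KK_maximals :
    KK {J : SIr M | IsMaximalIdealM J.carrier} = ⋂₀ {Q : Set M | IsMaximalIdealM Q} := by
  rw [KK_eq_sInter_image]
  congr 1
  ext Q
  exact ⟨fun ⟨I, hI, hIQ⟩ => hIQ ▸ hI, fun hQ => ⟨⟨Q, hQ.isStronglyIrr⟩, hQ, rfl⟩⟩

end SIr

/-- the set of maximal ideals is dense in the terminal space iff
the m-radical equals the s-radical. -/
theorem dense_maximals_iff (M : Type*) [CommMonoid M] :
    Dense {J : SIr M | IsMaximalIdealM J.carrier} ↔
      ⋂₀ {Q : Set M | IsMaximalIdealM Q} = ⋂₀ {J : Set M | IsStronglyIrr J} := by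
  rw [SIr.dense_iff_KK_eq, SIr.KK_maximals, SIr.KK_univ]
end
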